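/- arXiv:2403.00797 — 3 statements merged into one kernel-verified Lean document; each statement's English description precedes it below -/
import Mathlib

section
/- Let $r\in(0,1)$, $q\in[1,\infty)$, $E\subset\mathbb{R}^N$ measurable, and $u\in L^q(E,\mathbb{R}^d)$. Then $\sup_{\varepsilon\in(0,1)}\int_E\frac{1}{\varepsilon^N}\int_{E\cap B_\varepsilon(x)}\frac{|u(x)-u(y)|^q}{|x-y|^{rq}}dy\,dx<\infty$ if and only if $\limsup_{\varepsilon\to 0^+}\int_E\frac{1}{\varepsilon^N}\int_{E\cap B_\varepsilon(x)}\frac{|u(x)-u(y)|^q}{|x-y|^{rq}}dy\,dx<\infty$. -/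
open MeasureTheory Filter
open scoped ENNReal Topology

noncomputable section

/-!
Only the scales bounded away from `0` need control. For `ε₁ ≤ ε < 1`, split `B_ε(x)` into
`B_{ε₁}(x)` and an annulus on which `|x - y|^{-rq} ≤ ε₁^{-rq}`; this bounds `Φ ε` by
`Φ ε₁ + ε₁^{-N-rq} ∫_E ∫_{E ∩ B_1(x)} |u(x) - u(y)|^q`. The last integral is finite: bound
`|u(x) - u(y)|^q ≲ |u(x)|^q + |u(y)|^q`; by Tonelli and the symmetry of `|x - y| < 1` both
terms give the same integral, which is at most `|B_1| ‖u‖_q^q`.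
-/

open Metric Set

theorem bounded_on_Ioo_iff_limsup_lt_top {Φ : ℝ → ℝ≥0∞} {a b : ℝ} (hab : a < b)
    (hgrowth : ∀ ε₁ ∈ Ioo a b, ∃ C ≠ ⊤, ∀ ε ∈ Ico ε₁ b, Φ ε ≤ Φ ε₁ + C) :
    (∃ C ≠ ⊤, ∀ ε ∈ Ioo a b, Φ ε ≤ C) ↔ limsup Φ (𝓝[>] a) < ⊤ := by
  constructor
  · rintro ⟨C, hC, hbound⟩
    have hev : ∀ᶠ ε in 𝓝[>] a, Φ ε ≤ C :=
      eventually_of_mem (Ioo_mem_nhdsGT hab) hbound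
    exact (limsup_le_of_le (by isBoundedDefault) hev).trans_lt hC.lt_top
  · intro hlim
    set L := limsup Φ (𝓝[>] a)
    obtain ⟨δ, hδ, hδsub⟩ := mem_nhdsGT_iff_exists_Ioo_subset.mp
      (eventually_lt_of_limsup_lt (ENNReal.lt_add_right hlim.ne one_ne_zero))
    set ε₁ := (a + min δ b) / 2
    have hε₁ : ε₁ ∈ Ioo a (min δ b) := ⟨by grind, by grind⟩
    have hε₁b : ε₁ ∈ Ioo a b := ⟨hε₁.1, hε₁.2.trans_le (min_le_right _ _)⟩
    have hsmall : ∀ ε ∈ Ioo a (min δ b), Φ ε ≤ L + 1 := fun ε hε =>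
      (hδsub ⟨hε.1, hε.2.trans_le (min_le_left _ _)⟩).le
    obtain ⟨C, hC, hgrow⟩ := hgrowth ε₁ hε₁b
    refine ⟨L + 1 + C, by finiteness, fun ε hε => ?_⟩
    rcases lt_or_ge ε ε₁ with hlt | hge
    · exact (hsmall ε ⟨hε.1, hlt.trans hε₁.2⟩).trans le_self_add
    · exact (hgrow ε ⟨hge, hε.2⟩).trans (by gcongr; exact hsmall ε₁ hε₁)

def ballEnergy {α : Type*} [PseudoMetricSpace α] [MeasurableSpace α] (μ : Measure α)
    (K : α → α → ℝ≥0∞) (ε : ℝ) : ℝ≥0∞ :=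
  ∫⁻ x, ∫⁻ y in ball x ε, K x y ∂μ ∂μ

section ballEnergy

variable {α : Type*} [PseudoMetricSpace α] [MeasurableSpace α] {μ : Measure α}

theorem ballEnergy_mono_radius (K : α → α → ℝ≥0∞) {ε ε' : ℝ} (h : ε ≤ ε') :
    ballEnergy μ K ε ≤ ballEnergy μ K ε' :=
  lintegral_mono fun _ => lintegral_mono_set (ball_subset_ball h)

theorem ballEnergy_mono {K L : α → α → ℝ≥0∞} (h : ∀ x y, K x y ≤ L x y) (ε : ℝ) :
    ballEnergy μ K ε ≤ ballEnergy μ L ε :=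
  lintegral_mono fun x => lintegral_mono fun y => h x y

theorem ballEnergy_const_mul {c : ℝ≥0∞} (hc : c ≠ ⊤) (K : α → α → ℝ≥0∞) (ε : ℝ) :
    ballEnergy μ (fun x y => c * K x y) ε = c * ballEnergy μ K ε := by
  simp only [ballEnergy, lintegral_const_mul' _ _ hc]

theorem ballEnergy_left_le {V : ℝ≥0∞} (hV : V ≠ ⊤) {ε : ℝ} (hball : ∀ x, μ (ball x ε) ≤ V)
    (f : α → ℝ≥0∞) :
    ballEnergy μ (fun x _ => f x) ε ≤ V * ∫⁻ x, f x ∂μ := by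
  rw [ballEnergy, mul_comm, ← lintegral_mul_const' _ _ hV]
  exact lintegral_mono fun x => by rw [setLIntegral_const]; gcongr; exact hball x

variable [OpensMeasurableSpace α]

theorem setLIntegral_div_edist_rpow_le (x : α) (f : α → ℝ≥0∞) {s : ℝ} (hs : 0 ≤ s)
    {ε₁ : ℝ} (hε₁ : 0 < ε₁) (ε : ℝ) :
    ∫⁻ y in ball x ε, f y / edist x y ^ s ∂μ ≤
      ∫⁻ y in ball x ε₁, f y / edist x y ^ s ∂μ +
        (ENNReal.ofReal ε₁ ^ s)⁻¹ * ∫⁻ y in ball x ε, f y ∂μ := by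
  have hcover : ball x ε ⊆ ball x ε₁ ∪ (ball x ε \ ball x ε₁) := by
    rw [union_sdiff_self]; exact subset_union_right
  have hfar : ∀ y ∈ ball x ε \ ball x ε₁,
      f y / edist x y ^ s ≤ (ENNReal.ofReal ε₁ ^ s)⁻¹ * f y := by
    rintro y ⟨-, hy⟩
    have : ENNReal.ofReal ε₁ ≤ edist x y := by
      rw [edist_dist, dist_comm]
      exact ENNReal.ofReal_le_ofReal (not_lt.mp hy)
    rw [div_eq_mul_inv, mul_comm]
    gcongr
  calc ∫⁻ y in ball x ε, f y / edist x y ^ s ∂μ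
      ≤ ∫⁻ y in ball x ε₁, f y / edist x y ^ s ∂μ +
          ∫⁻ y in ball x ε \ ball x ε₁, f y / edist x y ^ s ∂μ :=
        (lintegral_mono_set hcover).trans (lintegral_union_le _ _ _)
    _ ≤ ∫⁻ y in ball x ε₁, f y / edist x y ^ s ∂μ +
          ∫⁻ y in ball x ε \ ball x ε₁, (ENNReal.ofReal ε₁ ^ s)⁻¹ * f y ∂μ := by
        gcongr 1
        exact setLIntegral_mono' (measurableSet_ball.diff measurableSet_ball) hfar
    _ ≤ _ := by
        rw [lintegral_const_mul' _ _ (by simp [hε₁])]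
        gcongr
        exact sdiff_subset

theorem setLIntegral_ball_eq_lintegral_indicator (K : α → α → ℝ≥0∞) (ε : ℝ) (x : α) :
    ∫⁻ y in ball x ε, K x y ∂μ =
      ∫⁻ y, {p : α × α | dist p.2 p.1 < ε}.indicator (Function.uncurry K) (x, y) ∂μ := by
  rw [← lintegral_indicator measurableSet_ball]
  rfl

variable [SecondCountableTopology α] [SFinite μ]

theorem measurableSet_dist_lt (ε : ℝ) : MeasurableSet {p : α × α | dist p.2 p.1 < ε} :=
  measurableSet_lt (measurable_snd.dist measurable_fst) measurable_const

theorem ballEnergy_eq_lintegral_prod {K : α → α → ℝ≥0∞}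
    (hK : AEMeasurable (Function.uncurry K) (μ.prod μ)) (ε : ℝ) :
    ballEnergy μ K ε =
      ∫⁻ p, {p : α × α | dist p.2 p.1 < ε}.indicator (Function.uncurry K) p ∂(μ.prod μ) := by
  rw [lintegral_prod _ (hK.indicator (measurableSet_dist_lt ε))]
  simp only [ballEnergy, setLIntegral_ball_eq_lintegral_indicator]

theorem aemeasurable_setLIntegral_ball {K : α → α → ℝ≥0∞}
    (hK : AEMeasurable (Function.uncurry K) (μ.prod μ)) (ε : ℝ) :
    AEMeasurable (fun x => ∫⁻ y in ball x ε, K x y ∂μ) μ := by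
  simp only [setLIntegral_ball_eq_lintegral_indicator]
  exact (hK.indicator (measurableSet_dist_lt ε)).lintegral_prod_right'

theorem ballEnergy_swap {K : α → α → ℝ≥0∞} (hK : AEMeasurable (Function.uncurry K) (μ.prod μ))
    (ε : ℝ) : ballEnergy μ (fun x y => K y x) ε = ballEnergy μ K ε := by
  rw [ballEnergy_eq_lintegral_prod hK.prod_swap, ballEnergy_eq_lintegral_prod hK,
    ← lintegral_prod_swap]
  congr 1
  ext p
  simp only [indicator, mem_ofPred_eq, Prod.fst_swap, Prod.snd_swap, dist_comm p.1]
  rfl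

theorem ballEnergy_add {K L : α → α → ℝ≥0∞} (hK : AEMeasurable (Function.uncurry K) (μ.prod μ))
    (hL : AEMeasurable (Function.uncurry L) (μ.prod μ)) (ε : ℝ) :
    ballEnergy μ (fun x y => K x y + L x y) ε = ballEnergy μ K ε + ballEnergy μ L ε := by
  rw [ballEnergy_eq_lintegral_prod (hK.add hL), ballEnergy_eq_lintegral_prod hK,
    ballEnergy_eq_lintegral_prod hL, ← lintegral_add_left' (hK.indicator (measurableSet_dist_lt ε))]
  congr 1
  ext p
  exact congrFun (indicator_add' _ _ _) p

theorem ballEnergy_div_edist_rpow_le {K : α → α → ℝ≥0∞}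
    (hK : AEMeasurable (Function.uncurry K) (μ.prod μ)) {s : ℝ} (hs : 0 ≤ s) {ε₁ : ℝ}
    (hε₁ : 0 < ε₁) (ε : ℝ) :
    ballEnergy μ (fun x y => K x y / edist x y ^ s) ε ≤
      ballEnergy μ (fun x y => K x y / edist x y ^ s) ε₁ +
        (ENNReal.ofReal ε₁ ^ s)⁻¹ * ballEnergy μ K ε := by
  calc ballEnergy μ (fun x y => K x y / edist x y ^ s) ε
      ≤ ∫⁻ x, (∫⁻ y in ball x ε₁, K x y / edist x y ^ s ∂μ) +
          (ENNReal.ofReal ε₁ ^ s)⁻¹ * ∫⁻ y in ball x ε, K x y ∂μ ∂μ :=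
        lintegral_mono fun x => setLIntegral_div_edist_rpow_le x (K x) hs hε₁ ε
    _ = _ := by
        rw [lintegral_add_right' _ ((aemeasurable_setLIntegral_ball hK ε).const_mul _),
          lintegral_const_mul' _ _ (by simp [hε₁])]
        rfl

theorem ballEnergy_rpow_enorm_sub_lt_top {F : Type*} [NormedAddCommGroup F] {g : α → F} {q : ℝ}
    (hq : 1 ≤ q) (hg : MemLp g (ENNReal.ofReal q) μ) {V : ℝ≥0∞} (hV : V ≠ ⊤) {ε : ℝ}
    (hball : ∀ x, μ (ball x ε) ≤ V) :
    ballEnergy μ (fun x y => ‖g x - g y‖ₑ ^ q) ε < ⊤ := by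
  have hM : ∫⁻ x, ‖g x‖ₑ ^ q ∂μ < ⊤ := by
    simpa [ENNReal.toReal_ofReal (zero_le_one.trans hq)] using
      lintegral_rpow_enorm_lt_top_of_eLpNorm_lt_top (by simp; linarith) ENNReal.ofReal_ne_top
        hg.eLpNorm_lt_top
  have hf : AEMeasurable (fun x => ‖g x‖ₑ ^ q) μ := hg.aestronglyMeasurable.enorm.pow_const q
  calc ballEnergy μ (fun x y => ‖g x - g y‖ₑ ^ q) ε
      ≤ ballEnergy μ (fun x y => 2 ^ (q - 1) * (‖g x‖ₑ ^ q + ‖g y‖ₑ ^ q)) ε :=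
        ballEnergy_mono (fun x y => (ENNReal.rpow_le_rpow enorm_sub_le (by linarith)).trans
          (ENNReal.rpow_add_le_mul_rpow_add_rpow _ _ hq)) ε
    _ = 2 ^ (q - 1) * (2 * ballEnergy μ (fun x _ => ‖g x‖ₑ ^ q) ε) := by
        rw [ballEnergy_const_mul (by simp), ballEnergy_add hf.comp_fst hf.comp_snd,
          ballEnergy_swap (K := fun x _ => ‖g x‖ₑ ^ q) hf.comp_fst, two_mul]
    _ ≤ 2 ^ (q - 1) * (2 * (V * ∫⁻ x, ‖g x‖ₑ ^ q ∂μ)) := by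
        gcongr; exact ballEnergy_left_le hV hball _
    _ < ⊤ := by finiteness

end ballEnergy

theorem stmt_5_general (N d : ℕ) (q r : ℝ) (hq : 1 ≤ q) (hr : r ∈ Set.Ioo (0:ℝ) 1)
    (Eset : Set (EuclideanSpace ℝ (Fin N)))
    (u : EuclideanSpace ℝ (Fin N) → EuclideanSpace ℝ (Fin d))
    (hu : MemLp u (ENNReal.ofReal q) (volume.restrict Eset))
    (Φ : ℝ → ℝ≥0∞)
    (hΦ : ∀ ε : ℝ, Φ ε = ∫⁻ x in Eset, (ENNReal.ofReal (ε ^ N))⁻¹ *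
        ∫⁻ y in Eset ∩ Metric.ball x ε,
          (‖u x - u y‖₊ : ℝ≥0∞) ^ q / (‖x - y‖₊ : ℝ≥0∞) ^ (r * q)) :
    (∃ C : ℝ≥0∞, C ≠ ⊤ ∧ ∀ ε ∈ Set.Ioo (0:ℝ) 1, Φ ε ≤ C) ↔
      Filter.limsup Φ (𝓝[>] (0:ℝ)) < ⊤ := by
  set ν := volume.restrict Eset with hν
  set K := fun x y => ‖u x - u y‖ₑ ^ q
  have hK : AEMeasurable (Function.uncurry K) (ν.prod ν) :=
    (hu.aestronglyMeasurable.aemeasurable.comp_fst.sub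
      hu.aestronglyMeasurable.aemeasurable.comp_snd).enorm.pow_const q
  have hΦ' : ∀ ε > 0, Φ ε = (ENNReal.ofReal (ε ^ N))⁻¹ *
      ballEnergy ν (fun x y => K x y / edist x y ^ (r * q)) ε := by
    intro ε hε
    rw [hΦ, ballEnergy, ← lintegral_const_mul' _ _ (by simp; positivity)]
    refine lintegral_congr fun x => ?_
    rw [hν, Measure.restrict_restrict measurableSet_ball, inter_comm]
    simp only [K, edist_eq_enorm_sub]
    rfl
  have hT : ballEnergy ν K 1 < ⊤ :=
    ballEnergy_rpow_enorm_sub_lt_top hq hu measure_ball_lt_top.ne fun x =>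
      (Measure.restrict_apply_le _ _).trans (Measure.addHaar_ball_center volume x 1).le
  refine bounded_on_Ioo_iff_limsup_lt_top one_pos fun ε₁ hε₁ => ?_
  refine ⟨(ENNReal.ofReal (ε₁ ^ N))⁻¹ * ((ENNReal.ofReal ε₁ ^ (r * q))⁻¹ * ballEnergy ν K 1),
    ?_, fun ε hε => ?_⟩
  · have hε₁pos : 0 < ENNReal.ofReal ε₁ := ENNReal.ofReal_pos.mpr hε₁.1
    exact ENNReal.mul_ne_top (by simpa using pow_pos hε₁.1 N) (ENNReal.mul_ne_top
      (ENNReal.inv_ne_top.mpr (ENNReal.rpow_pos hε₁pos ENNReal.ofReal_ne_top).ne') hT.ne)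
  rw [hΦ' ε (hε₁.1.trans_le hε.1), hΦ' ε₁ hε₁.1, ← mul_add]
  gcongr ?_ * ?_
  · exact ENNReal.inv_le_inv.mpr (ENNReal.ofReal_le_ofReal (pow_le_pow_left₀ hε₁.1.le hε.1 N))
  · exact (ballEnergy_div_edist_rpow_le hK (mul_nonneg hr.1.le (by linarith)) hε₁.1 ε).trans
      (by gcongr; exact ballEnergy_mono_radius K hε.2.le)

/-- For `r ∈ (0,1)`, `q ∈ [1,∞)`, a measurable set `E ⊆ ℝ^N` and
`u ∈ L^q(E, ℝ^d)`, the quantity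
`Φ(ε) = ∫_E ε^{-N} ∫_{E ∩ B_ε(x)} ‖u(x)-u(y)‖^q/‖x-y‖^{rq} dy dx`
is bounded on `(0,1)` if and only if its `limsup` as `ε → 0⁺` is finite. -/
theorem stmt_5 (N d : ℕ) (q r : ℝ) (hq : 1 ≤ q) (hr : r ∈ Set.Ioo (0:ℝ) 1)
    (Eset : Set (EuclideanSpace ℝ (Fin N))) (hEm : MeasurableSet Eset)
    (u : EuclideanSpace ℝ (Fin N) → EuclideanSpace ℝ (Fin d))
    (hu : MemLp u (ENNReal.ofReal q) (volume.restrict Eset))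
    (Φ : ℝ → ℝ≥0∞)
    (hΦ : ∀ ε : ℝ, Φ ε = ∫⁻ x in Eset, (ENNReal.ofReal (ε ^ N))⁻¹ *
        ∫⁻ y in Eset ∩ Metric.ball x ε,
          (‖u x - u y‖₊ : ℝ≥0∞) ^ q / (‖x - y‖₊ : ℝ≥0∞) ^ (r * q)) :
    (∃ C : ℝ≥0∞, C ≠ ⊤ ∧ ∀ ε ∈ Set.Ioo (0:ℝ) 1, Φ ε ≤ C) ↔
      Filter.limsup Φ (𝓝[>] (0:ℝ)) < ⊤ :=
  stmt_5_general N d q r hq hr Eset u hu Φ hΦ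
end
end

section
/- Let $r\in(0,1)$, $q\in[1,\infty)$. Then $u\in B^r_{q,\infty}(\mathbb{R}^N,\mathbb{R}^d)$ if and only if $u\in L^q(\mathbb{R}^N,\mathbb{R}^d)$ and $\sup_{\varepsilon\in(0,1)}\int_{\mathbb{R}^N}\frac{1}{\varepsilon^N}\int_{B_\varepsilon(x)}\frac{|u(x)-u(y)|^q}{|x-y|^{rq}}dy\,dx<\infty$. -/
/-!
Write `G(h) = ∫ ‖u(x + h) - u(x)‖^q dx`. Tonelli and translation invariance turn the double
integral over the balls `B_ε(x)` into `∫_{B_ε(0)} G(w) / |w|^{rq} dw`, so a bound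
`G(h) ≤ C |h|^{rq}` gives the ball bound `C |B_ε|` at once.

Conversely, for `|h| ≥ 1` simply `G(h) ≤ 2^q ‖u‖_q^q`. For `0 < |h| = ε < 1`, average the
quasi-triangle inequality `G(h) ≤ 2^{q-1} (G(h - w) + G(w))` over `w` in the ball `B(h/2, ε/4)`:
it is invariant under `w ↦ h - w` and lies in `B_ε(0)`, where `G(w) ≤ ε^{rq} G(w) / |w|^{rq}`.
Hence `|B_{ε/4}| G(h) ≤ 2^q ε^{rq} ∫_{B_ε(0)} G(w) / |w|^{rq} dw`, and the ball bound at scale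
`ε` controls `G(h) / ε^{rq}` uniformly.
-/

open MeasureTheory Metric Module
open scoped ENNReal

noncomputable section

section ShiftDifference

variable {E F : Type*} [NormedAddCommGroup E] [MeasurableSpace E] [NormedAddCommGroup F]
  {μ : Measure E} {q s : ℝ} {u : E → F}

def shiftDiff (μ : Measure E) (q : ℝ) (u : E → F) (h : E) : ℝ≥0∞ :=
  ∫⁻ x, (‖u (x + h) - u x‖₊ : ℝ≥0∞) ^ q ∂μ

def ballDiff (μ : Measure E) (q s : ℝ) (u : E → F) (ε : ℝ) : ℝ≥0∞ :=
  ∫⁻ x, ∫⁻ y in ball x ε, (‖u x - u y‖₊ : ℝ≥0∞) ^ q / (‖x - y‖₊ : ℝ≥0∞) ^ s ∂μ ∂μ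

theorem lintegral_nnnorm_sub_rpow_le {α : Type*} [MeasurableSpace α] {ν : Measure α}
    (hq : 1 ≤ q) {f g k : α → F} (hgk : AEStronglyMeasurable (fun x => g x - k x) ν) :
    ∫⁻ x, (‖f x - k x‖₊ : ℝ≥0∞) ^ q ∂ν ≤
      2 ^ (q - 1) * (∫⁻ x, (‖f x - g x‖₊ : ℝ≥0∞) ^ q ∂ν + ∫⁻ x, (‖g x - k x‖₊ : ℝ≥0∞) ^ q ∂ν) := by
  rw [← lintegral_add_right' _ (hgk.nnnorm.aemeasurable.coe_nnreal_ennreal.pow_const q),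
    ← lintegral_const_mul' _ _ (by simp)]
  refine lintegral_mono fun x => ?_
  calc (‖f x - k x‖₊ : ℝ≥0∞) ^ q ≤ ((‖f x - g x‖₊ : ℝ≥0∞) + ‖g x - k x‖₊) ^ q := by
        gcongr
        rw [← sub_add_sub_cancel (f x) (g x) (k x)]
        exact_mod_cast nnnorm_add_le _ _
    _ ≤ _ := ENNReal.rpow_add_le_mul_rpow_add_rpow _ _ hq

theorem ENNReal.two_rpow_sub_one_mul_add_self (q : ℝ) (a : ℝ≥0∞) :
    (2 : ℝ≥0∞) ^ (q - 1) * (a + a) = 2 ^ q * a := by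
  rw [← two_mul, ← mul_assoc]
  conv_rhs => rw [← sub_add_cancel q 1, ENNReal.rpow_add _ _ two_ne_zero ENNReal.ofNat_ne_top,
    ENNReal.rpow_one]

theorem shiftDiff_zero (hq : 0 < q) : shiftDiff μ q u 0 = 0 := by
  simp [shiftDiff, ENNReal.zero_rpow_of_pos hq]

theorem setLIntegral_ball_eq_ball_zero [BorelSpace E] [μ.IsAddLeftInvariant] (x : E) (ε : ℝ)
    (f : E → ℝ≥0∞) :
    ∫⁻ y in ball x ε, f y ∂μ = ∫⁻ w in ball 0 ε, f (x + w) ∂μ := by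
  rw [← (measurePreserving_add_left μ x).setLIntegral_comp_preimage_emb
    (measurableEmbedding_addLeft x), preimage_add_left_ball, neg_add_cancel]

variable [BorelSpace E] [μ.IsAddRightInvariant]

theorem lintegral_nnnorm_shift_sub_shift_rpow (h w : E) :
    ∫⁻ x, (‖u (x + h) - u (x + w)‖₊ : ℝ≥0∞) ^ q ∂μ = shiftDiff μ q u (h - w) := by
  rw [shiftDiff,
    ← lintegral_add_right_eq_self (fun x => (‖u (x + (h - w)) - u x‖₊ : ℝ≥0∞) ^ q) w]
  simp only [add_assoc, add_sub_cancel]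

theorem shiftDiff_le_two_rpow_mul_lintegral (hq : 1 ≤ q) (hu : AEStronglyMeasurable u μ)
    (h : E) : shiftDiff μ q u h ≤ 2 ^ q * ∫⁻ x, (‖u x‖₊ : ℝ≥0∞) ^ q ∂μ := by
  have key := lintegral_nnnorm_sub_rpow_le hq (f := fun x => u (x + h)) (g := 0) (k := u)
    (aestronglyMeasurable_const.sub hu)
  simp only [Pi.zero_apply, sub_zero, zero_sub, nnnorm_neg,
    lintegral_add_right_eq_self (fun x => (‖u x‖₊ : ℝ≥0∞) ^ q) h] at key
  rwa [ENNReal.two_rpow_sub_one_mul_add_self] at key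

theorem shiftDiff_le_add (hq : 1 ≤ q) (hu : AEStronglyMeasurable u μ) (h w : E) :
    shiftDiff μ q u h ≤ 2 ^ (q - 1) * (shiftDiff μ q u (h - w) + shiftDiff μ q u w) := by
  have key := lintegral_nnnorm_sub_rpow_le hq (f := fun x => u (x + h))
    (g := fun x => u (x + w)) (k := u)
    ((hu.comp_measurePreserving (measurePreserving_add_right μ w)).sub hu)
  rwa [lintegral_nnnorm_shift_sub_shift_rpow] at key

theorem lintegral_div_eq_shiftDiff_div (hu : AEStronglyMeasurable u μ) (h : E) (c : ℝ≥0∞) :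
    ∫⁻ x, (‖u (x + h) - u x‖₊ : ℝ≥0∞) ^ q / c ∂μ = shiftDiff μ q u h / c :=
  lintegral_mul_const'' _ (((hu.comp_measurePreserving (measurePreserving_add_right μ h)).sub
    hu).nnnorm.aemeasurable.coe_nnreal_ennreal.pow_const q)

theorem shiftDiff_div_le_of_one_le_norm (hq : 1 ≤ q) (hs : 0 ≤ s)
    (hu : AEStronglyMeasurable u μ) {h : E} (hh : 1 ≤ ‖h‖) :
    shiftDiff μ q u h / (‖h‖₊ : ℝ≥0∞) ^ s ≤ 2 ^ q * ∫⁻ x, (‖u x‖₊ : ℝ≥0∞) ^ q ∂μ := by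
  have hh' : 1 ≤ (‖h‖₊ : ℝ≥0∞) :=
    ENNReal.one_le_coe_iff.2 (by simpa [← NNReal.coe_le_coe] using hh)
  refine le_trans (ENNReal.div_le_of_le_mul ?_) (shiftDiff_le_two_rpow_mul_lintegral hq hu h)
  exact le_mul_of_one_le_right' (ENNReal.one_rpow s ▸ ENNReal.rpow_le_rpow hh' hs)

end ShiftDifference

section HaarMeasure

variable {E F : Type*} [NormedAddCommGroup E] [NormedSpace ℝ E] [FiniteDimensional ℝ E]
  [MeasurableSpace E] [BorelSpace E] [NormedAddCommGroup F] {μ : Measure E} [μ.IsAddHaarMeasure]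
  {q s : ℝ} {u : E → F}

theorem aemeasurable_shiftDiff_integrand (hu : AEStronglyMeasurable u μ) :
    AEMeasurable (fun p : E × E => (‖u (p.1 + p.2) - u p.1‖₊ : ℝ≥0∞) ^ q) (μ.prod μ) :=
  ((hu.comp_quasiMeasurePreserving (quasiMeasurePreserving_add μ μ)).sub
    hu.comp_fst).nnnorm.aemeasurable.coe_nnreal_ennreal.pow_const q

theorem aemeasurable_shiftDiff (hu : AEStronglyMeasurable u μ) :
    AEMeasurable (shiftDiff μ q u) μ :=
  (aemeasurable_shiftDiff_integrand hu).lintegral_prod_left'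

theorem ballDiff_eq_setLIntegral (hu : AEStronglyMeasurable u μ) (ε : ℝ) :
    ballDiff μ q s u ε = ∫⁻ w in ball 0 ε, shiftDiff μ q u w / (‖w‖₊ : ℝ≥0∞) ^ s ∂μ := by
  have hinner : ∀ x, ∫⁻ y in ball x ε, (‖u x - u y‖₊ : ℝ≥0∞) ^ q / (‖x - y‖₊ : ℝ≥0∞) ^ s ∂μ =
      ∫⁻ w in ball 0 ε, (‖u (x + w) - u x‖₊ : ℝ≥0∞) ^ q / (‖w‖₊ : ℝ≥0∞) ^ s ∂μ := fun x => by
    rw [setLIntegral_ball_eq_ball_zero]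
    refine lintegral_congr fun w => ?_
    rw [sub_add_cancel_left, nnnorm_neg, ← nnnorm_neg, neg_sub]
  have hmeas : AEMeasurable (fun p : E × E =>
      (‖u (p.1 + p.2) - u p.1‖₊ : ℝ≥0∞) ^ q / (‖p.2‖₊ : ℝ≥0∞) ^ s)
      (μ.prod (μ.restrict (ball 0 ε))) :=
    ((aemeasurable_shiftDiff_integrand hu).div (by fun_prop)).mono_measure
      (Measure.prod_mono le_rfl Measure.restrict_le_self)
  simp_rw [ballDiff, hinner]
  rw [lintegral_lintegral_swap hmeas]
  simp only [lintegral_div_eq_shiftDiff_div hu]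

theorem ballDiff_le (hq : 0 < q) (hu : AEStronglyMeasurable u μ) {C : ℝ≥0∞}
    (hC : ∀ h : E, h ≠ 0 → shiftDiff μ q u h / (‖h‖₊ : ℝ≥0∞) ^ s ≤ C) (ε : ℝ) :
    ballDiff μ q s u ε ≤ C * μ (ball 0 ε) := by
  rw [ballDiff_eq_setLIntegral hu, ← setLIntegral_const]
  refine lintegral_mono fun w => ?_
  rcases eq_or_ne w 0 with rfl | hw
  · -- `0 / 0 = 0` in `ℝ≥0∞`
    simp [shiftDiff_zero hq]
  · exact hC w hw

theorem setLIntegral_ball_shiftDiff_le (hs : 0 ≤ s) (hu : AEStronglyMeasurable u μ) {ε : ℝ}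
    (hε : 0 < ε) :
    ∫⁻ w in ball 0 ε, shiftDiff μ q u w ∂μ ≤ ENNReal.ofReal ε ^ s * ballDiff μ q s u ε := by
  have hc0 : ENNReal.ofReal ε ^ s ≠ 0 :=
    (ENNReal.rpow_pos (ENNReal.ofReal_pos.2 hε) ENNReal.ofReal_ne_top).ne'
  have hcT : ENNReal.ofReal ε ^ s ≠ ⊤ := ENNReal.rpow_ne_top_of_nonneg hs ENNReal.ofReal_ne_top
  rw [← ENNReal.div_le_iff' hc0 hcT, ballDiff_eq_setLIntegral hu, div_eq_mul_inv,
    ← lintegral_mul_const' _ _ (ENNReal.inv_ne_top.2 hc0)]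
  refine setLIntegral_mono' measurableSet_ball fun w hw => ?_
  rw [← div_eq_mul_inv]
  refine ENNReal.div_le_div_left (ENNReal.rpow_le_rpow ?_ hs) _
  exact (ofReal_norm w).symm.trans_le (ENNReal.ofReal_le_ofReal (mem_ball_zero_iff.1 hw).le)

theorem shiftDiff_mul_measure_ball_le (hq : 1 ≤ q) (hu : AEStronglyMeasurable u μ) (h : E)
    (ρ : ℝ) :
    shiftDiff μ q u h * μ (ball ((2 : ℝ)⁻¹ • h) ρ) ≤
      2 ^ q * ∫⁻ w in ball ((2 : ℝ)⁻¹ • h) ρ, shiftDiff μ q u w ∂μ := by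
  set S := ball ((2 : ℝ)⁻¹ • h) ρ
  have hS : (fun w => h - w) ⁻¹' S = S := by
    ext w
    have : h - w - (2 : ℝ)⁻¹ • h = -(w - (2 : ℝ)⁻¹ • h) := by
      module
    simp only [S, Set.mem_preimage, mem_ball, dist_eq_norm, this, norm_neg]
  have hreflect : ∫⁻ w in S, shiftDiff μ q u (h - w) ∂μ = ∫⁻ w in S, shiftDiff μ q u w ∂μ := by
    simpa only [hS] using (Measure.measurePreserving_sub_left μ h).setLIntegral_comp_preimage_emb
      (measurableEmbedding_subLeft h) (shiftDiff μ q u) S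
  calc shiftDiff μ q u h * μ S = ∫⁻ _ in S, shiftDiff μ q u h ∂μ := (setLIntegral_const _ _).symm
    _ ≤ ∫⁻ w in S, 2 ^ (q - 1) * (shiftDiff μ q u (h - w) + shiftDiff μ q u w) ∂μ :=
      lintegral_mono fun w => shiftDiff_le_add hq hu h w
    _ = 2 ^ q * ∫⁻ w in S, shiftDiff μ q u w ∂μ := by
      rw [lintegral_const_mul' _ _ (by simp),
        lintegral_add_right' _ (aemeasurable_shiftDiff hu).restrict, hreflect,
        ENNReal.two_rpow_sub_one_mul_add_self]

theorem shiftDiff_div_mul_measure_ball_le (hq : 1 ≤ q) (hs : 0 ≤ s)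
    (hu : AEStronglyMeasurable u μ) {h : E} (hh : h ≠ 0) {C : ℝ≥0∞}
    (hC : ballDiff μ q s u ‖h‖ ≤ ENNReal.ofReal (‖h‖ ^ finrank ℝ E) * C) :
    shiftDiff μ q u h / (‖h‖₊ : ℝ≥0∞) ^ s * μ (ball 0 1) ≤
      2 ^ q * ENNReal.ofReal (4 ^ finrank ℝ E) * C := by
  set ε := ‖h‖
  have hε : 0 < ε := norm_pos_iff.2 hh
  have hnorm : ENNReal.ofReal ε = ‖h‖₊ := ofReal_norm h
  set S := ball ((2 : ℝ)⁻¹ • h) (ε / 4)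
  have hS : S ⊆ ball 0 ε := by
    refine ball_subset_ball' ?_
    rw [dist_zero_right, norm_smul, Real.norm_eq_abs, abs_of_pos (by norm_num)]
    linarith
  have hμS : μ S = ENNReal.ofReal ((ε / 4) ^ finrank ℝ E) * μ (ball 0 1) :=
    Measure.addHaar_ball_of_pos μ _ (by positivity)
  have hpow : ENNReal.ofReal (ε ^ finrank ℝ E) =
      ENNReal.ofReal (4 ^ finrank ℝ E) * ENNReal.ofReal ((ε / 4) ^ finrank ℝ E) := by
    rw [← ENNReal.ofReal_mul (by positivity), ← mul_pow, mul_div_cancel₀ _ four_ne_zero]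
  have key : shiftDiff μ q u h * μ S ≤
      2 ^ q * ENNReal.ofReal (ε ^ finrank ℝ E) * C * (‖h‖₊ : ℝ≥0∞) ^ s :=
    calc shiftDiff μ q u h * μ S ≤ 2 ^ q * ∫⁻ w in S, shiftDiff μ q u w ∂μ :=
          shiftDiff_mul_measure_ball_le hq hu h _
      _ ≤ 2 ^ q * ∫⁻ w in ball 0 ε, shiftDiff μ q u w ∂μ := by gcongr
      _ ≤ 2 ^ q * (ENNReal.ofReal ε ^ s * (ENNReal.ofReal (ε ^ finrank ℝ E) * C)) := by
          gcongr
          exact (setLIntegral_ball_shiftDiff_le hs hu hε).trans (by gcongr)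
      _ = _ := by rw [hnorm]; ring
  have ha0 : ENNReal.ofReal ((ε / 4) ^ finrank ℝ E) ≠ 0 := by
    rw [ne_eq, ENNReal.ofReal_eq_zero, not_le]; positivity
  rw [← ENNReal.mul_le_mul_iff_left ha0 ENNReal.ofReal_ne_top]
  calc shiftDiff μ q u h / (‖h‖₊ : ℝ≥0∞) ^ s * μ (ball 0 1) *
        ENNReal.ofReal ((ε / 4) ^ finrank ℝ E) = shiftDiff μ q u h * μ S / (‖h‖₊ : ℝ≥0∞) ^ s := by
        rw [hμS]; simp only [div_eq_mul_inv]; ring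
    _ ≤ 2 ^ q * ENNReal.ofReal (ε ^ finrank ℝ E) * C := ENNReal.div_le_of_le_mul key
    _ = _ := by rw [hpow]; ring

theorem exists_shiftDiff_bound_iff_exists_ballAverage_bound (hq : 1 ≤ q) (hs : 0 ≤ s)
    (hu : MemLp u (ENNReal.ofReal q) μ) :
    (∃ C : ℝ≥0∞, C ≠ ⊤ ∧ ∀ h : E, h ≠ 0 →
        (∫⁻ x, (‖u (x + h) - u x‖₊ : ℝ≥0∞) ^ q / (‖h‖₊ : ℝ≥0∞) ^ s ∂μ) ≤ C) ↔
      (∃ C : ℝ≥0∞, C ≠ ⊤ ∧ ∀ ε ∈ Set.Ioo (0 : ℝ) 1,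
        (∫⁻ x, (ENNReal.ofReal (ε ^ finrank ℝ E))⁻¹ *
          ∫⁻ y in ball x ε, (‖u x - u y‖₊ : ℝ≥0∞) ^ q / (‖x - y‖₊ : ℝ≥0∞) ^ s ∂μ ∂μ) ≤ C) := by
  have hum := hu.aestronglyMeasurable
  have hq0 : 0 < q := by linarith
  have hball_iff : ∀ {ε : ℝ}, 0 < ε → ∀ C : ℝ≥0∞,
      (∫⁻ x, (ENNReal.ofReal (ε ^ finrank ℝ E))⁻¹ *
        ∫⁻ y in ball x ε, (‖u x - u y‖₊ : ℝ≥0∞) ^ q / (‖x - y‖₊ : ℝ≥0∞) ^ s ∂μ ∂μ) ≤ C ↔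
      ballDiff μ q s u ε ≤ ENNReal.ofReal (ε ^ finrank ℝ E) * C := fun {ε} hε C => by
    have hc0 : ENNReal.ofReal (ε ^ finrank ℝ E) ≠ 0 := by
      rw [ne_eq, ENNReal.ofReal_eq_zero, not_le]; positivity
    rw [lintegral_const_mul' _ _ (ENNReal.inv_ne_top.2 hc0)]
    exact ENNReal.inv_mul_le_iff hc0 ENNReal.ofReal_ne_top
  simp only [lintegral_div_eq_shiftDiff_div hum]
  constructor
  · rintro ⟨C, hC, hbound⟩
    refine ⟨C * μ (ball 0 1), ENNReal.mul_ne_top hC measure_ball_lt_top.ne, fun ε hε => ?_⟩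
    rw [hball_iff hε.1, mul_left_comm, ← Measure.addHaar_ball_of_pos μ 0 hε.1]
    exact ballDiff_le hq0 hum hbound ε
  · rintro ⟨C, hC, hbound⟩
    have hA : ∫⁻ x, (‖u x‖₊ : ℝ≥0∞) ^ q ∂μ ≠ ⊤ := by
      have := lintegral_rpow_enorm_lt_top_of_eLpNorm_lt_top (by simpa using hq0)
        ENNReal.ofReal_ne_top hu.eLpNorm_lt_top
      rw [ENNReal.toReal_ofReal hq0.le] at this
      exact this.ne
    have hB0 : μ (ball 0 1) ≠ 0 := (measure_ball_pos μ _ one_pos).ne'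
    refine ⟨2 ^ q * ∫⁻ x, (‖u x‖₊ : ℝ≥0∞) ^ q ∂μ +
      2 ^ q * ENNReal.ofReal (4 ^ finrank ℝ E) * C / μ (ball 0 1), ?_, fun h hh => ?_⟩
    · exact ENNReal.add_ne_top.2 ⟨ENNReal.mul_ne_top (by simp) hA,
        ENNReal.div_ne_top (by finiteness) hB0⟩
    rcases le_or_gt 1 ‖h‖ with hh1 | hh1
    · exact (shiftDiff_div_le_of_one_le_norm hq hs hum hh1).trans le_self_add
    · refine le_add_left ?_
      rw [ENNReal.le_div_iff_mul_le (Or.inl hB0) (Or.inl measure_ball_lt_top.ne)]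
      exact shiftDiff_div_mul_measure_ball_le hq hs hum hh
        ((hball_iff (norm_pos_iff.2 hh) C).1 (hbound ‖h‖ ⟨norm_pos_iff.2 hh, hh1⟩))

end HaarMeasure

/-- For `r ∈ (0,1)`, `q ∈ [1,∞)`:
`u ∈ B^r_{q,∞}(ℝ^N,ℝ^d)` (i.e. `u ∈ L^q` with
`sup_{h≠0} ∫ ‖u(x+h)-u(x)‖^q/‖h‖^{rq} dx < ∞`) if and only if `u ∈ L^q` and
`sup_{ε∈(0,1)} ∫ ε^{-N} ∫_{B_ε(x)} ‖u(x)-u(y)‖^q/‖x-y‖^{rq} dy dx < ∞`. -/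
theorem stmt_8 (N d : ℕ) (q r : ℝ) (hq : 1 ≤ q) (hr : r ∈ Set.Ioo (0:ℝ) 1)
    (u : EuclideanSpace ℝ (Fin N) → EuclideanSpace ℝ (Fin d)) :
    (MemLp u (ENNReal.ofReal q) volume ∧
      ∃ C : ℝ≥0∞, C ≠ ⊤ ∧ ∀ h : EuclideanSpace ℝ (Fin N), h ≠ 0 →
        (∫⁻ x, (‖u (x + h) - u x‖₊ : ℝ≥0∞) ^ q / (‖h‖₊ : ℝ≥0∞) ^ (r * q)) ≤ C) ↔
    (MemLp u (ENNReal.ofReal q) volume ∧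
      ∃ C : ℝ≥0∞, C ≠ ⊤ ∧ ∀ ε ∈ Set.Ioo (0:ℝ) 1,
        (∫⁻ x, (ENNReal.ofReal (ε ^ N))⁻¹ *
          ∫⁻ y in Metric.ball x ε,
            (‖u x - u y‖₊ : ℝ≥0∞) ^ q / (‖x - y‖₊ : ℝ≥0∞) ^ (r * q)) ≤ C) := by
  refine and_congr_right fun hu => ?_
  have key := exists_shiftDiff_bound_iff_exists_ballAverage_bound hq
    (mul_nonneg hr.1.le (by linarith)) hu
  rwa [finrank_euclideanSpace_fin] at key
end
end

section
/- Let $q\in[1,\infty)$, $r\in(0,1)$, $u\in B^r_{q,\infty}(\mathbb{R}^N,\mathbb{R}^d)$, and let $\{\rho_\varepsilon\}$ be any kernel. Then $\limsup_{\varepsilon\to 0^+}\int_{\mathbb{R}^N}\int_{\mathbb{R}^N}\rho_\varepsilon(|x-y|)\frac{|u(x)-u(y)|^q}{|x-y|^{rq}}dy\,dx \le [u]^q_{B^r_{q,\infty}(\mathbb{R}^N,\mathbb{R}^d)}<\infty$. -/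
/-!
The limsup is bounded by bounding every term. Substituting `y = x + h` and applying Tonelli,
the double integral becomes `∫ ρ_ε(|h|) (∫ |u(x+h) - u(x)|^q / |h|^{rq} dx) dh`; the inner
integral is at most `[u]^q_{B^r_{q,∞}}` for every `h`, and `ρ_ε(|·|)` has total mass one.
-/

open MeasureTheory Filter
open scoped ENNReal Topology

noncomputable section

/-- A kernel on `(0,a)` (nonnegative, measurable, normalized, with the decreasing
support property). -/
def IsKernel (N : ℕ) (a : ℝ) (ρ : ℝ → ℝ → ℝ) : Prop :=
  (∀ ε ∈ Set.Ioo (0:ℝ) a,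
      (∀ t : ℝ, 0 ≤ ρ ε t) ∧ Measurable (ρ ε) ∧
      (∫ z : EuclideanSpace ℝ (Fin N), ρ ε ‖z‖) = 1) ∧
  ∀ δ : ℝ, 0 < δ →
    Filter.Tendsto (fun ε : ℝ => ∫ t in Set.Ioi δ, ρ ε t * t ^ ((N : ℝ) - 1))
      (𝓝[Set.Ioo (0:ℝ) a] 0) (𝓝 0)

section Translation

variable {G E : Type*} [AddCommGroup G] [MeasurableSpace G] [MeasurableAdd₂ G]
  [AddGroup E] [MeasurableSpace E] [MeasurableSub₂ E]
  {μ : Measure G} [SFinite μ] [μ.IsAddLeftInvariant] {u : G → E}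

theorem aemeasurable_sub_comp_add (hu : AEMeasurable u μ) :
    AEMeasurable (fun p : G × G => u (p.1 + p.2) - u p.1) (μ.prod μ) :=
  (hu.comp_quasiMeasurePreserving (quasiMeasurePreserving_add μ μ)).sub hu.comp_fst

theorem lintegral_lintegral_comp_sub_eq {Φ : G → E → ℝ≥0∞}
    (hΦ : Measurable (Function.uncurry Φ)) (hu : AEMeasurable u μ) :
    ∫⁻ x, ∫⁻ y, Φ (y - x) (u y - u x) ∂μ ∂μ = ∫⁻ h, ∫⁻ x, Φ h (u (x + h) - u x) ∂μ ∂μ := by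
  have translate (x : G) :
      ∫⁻ y, Φ (y - x) (u y - u x) ∂μ = ∫⁻ h, Φ h (u (x + h) - u x) ∂μ := by
    rw [← lintegral_add_left_eq_self _ x]
    simp_rw [add_sub_cancel_left]
  simp_rw [translate]
  exact lintegral_lintegral_swap <|
    hΦ.comp_aemeasurable (measurable_snd.aemeasurable.prodMk (aemeasurable_sub_comp_add hu))

theorem lintegral_lintegral_le_of_forall_lintegral_translate_le {w : G → ℝ≥0∞}
    (hw : Measurable w) (hw_one : ∫⁻ h, w h ∂μ = 1) {Ψ : G → E → ℝ≥0∞}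
    (hΨ : Measurable (Function.uncurry Ψ)) (hu : AEMeasurable u μ) {B : ℝ≥0∞}
    (hB : ∀ h, ∫⁻ x, Ψ h (u (x + h) - u x) ∂μ ≤ B) :
    ∫⁻ x, ∫⁻ y, w (y - x) * Ψ (y - x) (u y - u x) ∂μ ∂μ ≤ B := by
  have hΨ_translate (h : G) : AEMeasurable (fun x => Ψ h (u (x + h) - u x)) μ :=
    hΨ.comp_aemeasurable <| aemeasurable_const.prodMk <|
      (hu.comp_quasiMeasurePreserving (measurePreserving_add_right μ h).quasiMeasurePreserving).sub hu
  calc ∫⁻ x, ∫⁻ y, w (y - x) * Ψ (y - x) (u y - u x) ∂μ ∂μ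
      = ∫⁻ h, w h * ∫⁻ x, Ψ h (u (x + h) - u x) ∂μ ∂μ := by
        rw [lintegral_lintegral_comp_sub_eq (Φ := fun h v => w h * Ψ h v)
          ((hw.comp measurable_fst).mul hΨ) hu]
        simp_rw [lintegral_const_mul'' _ (hΨ_translate _)]
    _ ≤ ∫⁻ h, w h * B ∂μ := lintegral_mono fun h => mul_le_mul_right (hB h) _
    _ = B := by rw [lintegral_mul_const _ hw, hw_one, one_mul]

end Translation

theorem stmt_14_general (N d : ℕ) (q r a : ℝ) (hq : 1 ≤ q)
    (u : EuclideanSpace ℝ (Fin N) → EuclideanSpace ℝ (Fin d))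
    (hu : MemLp u (ENNReal.ofReal q) volume)
    (B : ℝ≥0∞)
    (hB : ∀ h : EuclideanSpace ℝ (Fin N), h ≠ 0 →
      (∫⁻ x, (‖u (x + h) - u x‖₊ : ℝ≥0∞) ^ q / (‖h‖₊ : ℝ≥0∞) ^ (r * q)) ≤ B)
    (ρ : ℝ → ℝ → ℝ) (hρ : IsKernel N a ρ) :
    Filter.limsup
      (fun ε : ℝ => ∫⁻ x, ∫⁻ y,
        ENNReal.ofReal (ρ ε ‖x - y‖) * (‖u x - u y‖₊ : ℝ≥0∞) ^ q /
          (‖x - y‖₊ : ℝ≥0∞) ^ (r * q))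
      (𝓝[Set.Ioo (0:ℝ) a] 0) ≤ B := by
  have hB_all (h : EuclideanSpace ℝ (Fin N)) :
      (∫⁻ x, (‖u (x + h) - u x‖₊ : ℝ≥0∞) ^ q / (‖h‖₊ : ℝ≥0∞) ^ (r * q)) ≤ B := by
    rcases eq_or_ne h 0 with rfl | hh
    · simp only [add_zero, sub_self, nnnorm_zero, ENNReal.coe_zero,
        ENNReal.zero_rpow_of_pos (by linarith : (0 : ℝ) < q), ENNReal.zero_div, lintegral_zero,
        zero_le]
    · exact hB h hh
  refine limsup_le_of_le (by isBoundedDefault) ?_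
  filter_upwards [self_mem_nhdsWithin] with ε hε
  obtain ⟨hρ_nonneg, hρ_meas, hρ_one⟩ := hρ.1 ε hε
  have hw_one : ∫⁻ z : EuclideanSpace ℝ (Fin N), ENNReal.ofReal (ρ ε ‖z‖) = 1 := by
    rw [← ofReal_integral_eq_lintegral_ofReal (integrable_of_integral_eq_one hρ_one)
      (Eventually.of_forall fun _ => hρ_nonneg _), hρ_one, ENNReal.ofReal_one]
  calc _ = ∫⁻ x, ∫⁻ y, ENNReal.ofReal (ρ ε ‖y - x‖) *
          ((‖u y - u x‖₊ : ℝ≥0∞) ^ q / (‖y - x‖₊ : ℝ≥0∞) ^ (r * q)) :=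
        lintegral_congr fun x => lintegral_congr fun y => by
          rw [mul_div_assoc, norm_sub_rev, ← neg_sub y, nnnorm_neg, ← neg_sub (u y), nnnorm_neg]
    _ ≤ B := lintegral_lintegral_le_of_forall_lintegral_translate_le
        (w := fun z => ENNReal.ofReal (ρ ε ‖z‖))
        (Ψ := fun h v => (‖v‖₊ : ℝ≥0∞) ^ q / (‖h‖₊ : ℝ≥0∞) ^ (r * q))
        (by fun_prop) hw_one (by fun_prop) hu.1.aemeasurable hB_all

/-- For `q ∈ [1,∞)`, `r ∈ (0,1)`, `u ∈ B^r_{q,∞}(ℝ^N,ℝ^d)`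
(with the Besov family bounded by a finite `B`, whose least value is
`[u]^q_{B^r_{q,∞}}`), and any kernel `ρ_ε`:
`limsup_{ε→0⁺} ∫∫ ρ_ε(|x-y|) ‖u(x)-u(y)‖^q/|x-y|^{rq} dy dx ≤ B < ∞`. -/
theorem stmt_14 (N d : ℕ) (hN : 0 < N) (q r a : ℝ) (hq : 1 ≤ q)
    (hr : r ∈ Set.Ioo (0:ℝ) 1) (ha : 0 < a)
    (u : EuclideanSpace ℝ (Fin N) → EuclideanSpace ℝ (Fin d))
    (hu : MemLp u (ENNReal.ofReal q) volume)
    (B : ℝ≥0∞) (hBfin : B ≠ ⊤)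
    (hB : ∀ h : EuclideanSpace ℝ (Fin N), h ≠ 0 →
      (∫⁻ x, (‖u (x + h) - u x‖₊ : ℝ≥0∞) ^ q / (‖h‖₊ : ℝ≥0∞) ^ (r * q)) ≤ B)
    (ρ : ℝ → ℝ → ℝ) (hρ : IsKernel N a ρ) :
    Filter.limsup
      (fun ε : ℝ => ∫⁻ x, ∫⁻ y,
        ENNReal.ofReal (ρ ε ‖x - y‖) * (‖u x - u y‖₊ : ℝ≥0∞) ^ q /
          (‖x - y‖₊ : ℝ≥0∞) ^ (r * q))
      (𝓝[Set.Ioo (0:ℝ) a] 0) ≤ B :=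
  stmt_14_general N d q r a hq u hu B hB ρ hρ
end
end
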